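/- Let b₁ = (0,0), b₂ = (1,0), q = (11/12, √23/12), and let S be the region consisting of points p with ∠(p b₁ b₂) ≤ π/6, ∠(p b₂ b₁) ≤ π/6, 0 ≤ p.x ≤ 1/2, p.y ≥ 0, and ‖p − b₁‖ ≥ 1/2. Then every point a ∈ S satisfies ‖a − q‖ ≤ 1 − 1/√6 (equivalently, ‖a − q‖ + ‖b₂ − q‖ ≤ 1). -/

import Mathlib

open EuclideanGeometry Metric Real

noncomputable def pt (x y : ℝ) : EuclideanSpace ℝ (Fin 2) := WithLp.toLp 2 ![x, y]

set_option maxHeartbeats 1000000 in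
private lemma q_alg (x y r s t : ℝ) (hx1 : x ≤ 1/2) (hy : 0 ≤ y)
    (hr : 1/2 ≤ r) (hr2 : r^2 = x^2 + y^2)
    (hcone : Real.sqrt 3 * r ≤ 2 * x)
    (hs : s^2 = 23) (hs0 : 0 ≤ s) (ht : t^2 = 6) :
    (x - 11/12)^2 + (y - s/12)^2 ≤ (1 - t/6)^2 := by
  have hw : (Real.sqrt 3)^2 = 3 := Real.sq_sqrt (by norm_num)
  have hw0 : (1:ℝ) ≤ Real.sqrt 3 := by
    have h := Real.sqrt_le_sqrt (show (1:ℝ) ≤ 3 by norm_num)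
    rwa [Real.sqrt_one] at h
  set w := Real.sqrt 3 with hwdef
  have hwpos : 0 < w := by linarith
  have hx0 : 0 ≤ x := by nlinarith [mul_nonneg hwpos.le (by linarith : (0:ℝ) ≤ r)]
  have hxx : 3*r^2 ≤ 4*x^2 := by
    nlinarith [mul_nonneg (sub_nonneg.2 hcone)
      (by nlinarith [mul_nonneg hwpos.le (by linarith : (0:ℝ) ≤ r)] : (0:ℝ) ≤ 2*x + w*r)]
  have h2y : 2*y ≤ r := by
    by_contra h
    push_neg at h
    nlinarith [mul_pos (sub_pos.2 h) (by linarith : (0:ℝ) < 2*y + r)]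
  have hrub : r ≤ 4/3 := by
    nlinarith [mul_le_mul_of_nonneg_right hw0 (by linarith : (0:ℝ) ≤ r)]
  have hsw : 11 ≤ s*(2+w) := by
    by_contra h
    push_neg at h
    nlinarith [mul_nonneg hs0 (by linarith : (0:ℝ) ≤ 2+w)]
  have h11y : 11*y ≤ s*(r+x) := by
    have h1 : (2+w)*y ≤ r + x := by nlinarith [mul_le_mul_of_nonneg_left h2y hwpos.le]
    calc 11*y ≤ (s*(2+w))*y := by nlinarith [mul_le_mul_of_nonneg_right hsw hy]
    _ = s*((2+w)*y) := by ring
    _ ≤ s*(r+x) := by nlinarith [mul_le_mul_of_nonneg_left h1 hs0]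
  have hA : 11*(r - x) ≤ s*y := by
    have h1 : 11*(r-x)*(r+x) ≤ (s*y)*(r+x) := by
      nlinarith [mul_le_mul_of_nonneg_right h11y hy]
    exact le_of_mul_le_mul_right h1 (by linarith)
  have ht5 : t ≤ 5/2 := by nlinarith [sq_nonneg (t - 5/2)]
  nlinarith [mul_nonneg (sub_nonneg.2 hr) (sub_nonneg.2 hrub)]

private lemma dist_pt (a b : EuclideanSpace ℝ (Fin 2)) :
    dist a b = Real.sqrt ((a 0 - b 0)^2 + (a 1 - b 1)^2) := by
  rw [EuclideanSpace.dist_eq]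
  congr 1
  simp [Fin.sum_univ_two, Real.dist_eq, sq_abs]

private lemma cos_angle_origin (a : EuclideanSpace ℝ (Fin 2)) :
    Real.cos (∠ a (pt 0 0) (pt 1 0)) = a 0 / dist a (pt 0 0) := by
  rw [EuclideanGeometry.angle, InnerProductGeometry.cos_angle]
  have h1 : (inner ℝ (a -ᵥ pt 0 0) (pt 1 0 -ᵥ pt 0 0) : ℝ) = a 0 := by
    simp [PiLp.inner_apply, pt, Fin.sum_univ_two]
  have h2 : ‖(pt 1 0 -ᵥ pt 0 0 : EuclideanSpace ℝ (Fin 2))‖ = 1 := by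
    rw [show (pt 1 0 -ᵥ pt 0 0 : EuclideanSpace ℝ (Fin 2)) = pt 1 0 by
      ext i; fin_cases i <;> simp [pt]]
    rw [EuclideanSpace.norm_eq]
    simp [pt, Fin.sum_univ_two]
  rw [h1, h2, ← dist_eq_norm_vsub]
  simp

set_option maxHeartbeats 1000000 in
/-- Every point a of the region S (given by the listed angle and coordinate
constraints) satisfies ‖a − q‖ ≤ 1 − 1/√6, equivalently ‖a − q‖ + ‖b₂ − q‖ ≤ 1,
where q = (11/12, √23/12). -/
theorem q_close_to_S (b₁ b₂ q a : EuclideanSpace ℝ (Fin 2))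
    (hb₁ : b₁ = pt 0 0) (hb₂ : b₂ = pt 1 0)
    (hq : q = pt (11/12) (Real.sqrt 23 / 12))
    (hang₁ : ∠ a b₁ b₂ ≤ π / 6) (hang₂ : ∠ a b₂ b₁ ≤ π / 6)
    (hx₀ : 0 ≤ a 0) (hx₁ : a 0 ≤ 1/2) (hy : 0 ≤ a 1)
    (hout : 1/2 ≤ dist a b₁) :
    dist a q ≤ 1 - 1 / Real.sqrt 6 ∧ dist a q + dist b₂ q ≤ 1 := by
  subst hb₁ hb₂ hq
  set x := a 0 with hxdef
  set y := a 1 with hydef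
  set r := dist a (pt 0 0) with hrdef
  have hs : (Real.sqrt 23)^2 = 23 := Real.sq_sqrt (by norm_num)
  have hs0 : 0 ≤ Real.sqrt 23 := Real.sqrt_nonneg 23
  have ht : (Real.sqrt 6)^2 = 6 := Real.sq_sqrt (by norm_num)
  have ht0 : (1:ℝ) ≤ Real.sqrt 6 := by
    have h := Real.sqrt_le_sqrt (show (1:ℝ) ≤ 6 by norm_num)
    rwa [Real.sqrt_one] at h
  have hr2 : r^2 = x^2 + y^2 := by
    rw [hrdef, dist_pt]
    rw [Real.sq_sqrt (by positivity)]
    simp [pt]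
    rfl
  -- cosine bound from the angle at b₁
  have hcos : Real.cos (π/6) ≤ Real.cos (∠ a (pt 0 0) (pt 1 0)) :=
    Real.cos_le_cos_of_nonneg_of_le_pi (EuclideanGeometry.angle_nonneg _ _ _)
      (by linarith [Real.pi_pos]) hang₁
  rw [cos_angle_origin, Real.cos_pi_div_six] at hcos
  have hrpos : (0:ℝ) < r := lt_of_lt_of_le (by norm_num) hout
  have hcone : Real.sqrt 3 * r ≤ 2 * x := by
    have h := mul_le_mul_of_nonneg_right hcos hrpos.le
    rw [div_mul_cancel₀ _ (ne_of_gt hrpos)] at h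
    linarith
  -- key coordinate estimate
  have key : (x - 11/12)^2 + (y - Real.sqrt 23/12)^2 ≤ (1 - Real.sqrt 6/6)^2 :=
    q_alg x y r _ _ hx₁ hy hout hr2 hcone hs hs0 ht
  have h16 : 1 / Real.sqrt 6 = Real.sqrt 6 / 6 := by
    have h6ne : Real.sqrt 6 ≠ 0 := by positivity
    field_simp
    linarith [ht]
  constructor
  · rw [dist_pt, h16]
    have h0 : (0:ℝ) ≤ 1 - Real.sqrt 6/6 := by nlinarith
    calc Real.sqrt ((a 0 - pt (11/12) (Real.sqrt 23 / 12) 0)^2 +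
            (a 1 - pt (11/12) (Real.sqrt 23 / 12) 1)^2)
        = Real.sqrt ((x - 11/12)^2 + (y - Real.sqrt 23/12)^2) := by
          rw [hxdef, hydef]; simp [pt]
      _ ≤ Real.sqrt ((1 - Real.sqrt 6/6)^2) := Real.sqrt_le_sqrt key
      _ = 1 - Real.sqrt 6/6 := Real.sqrt_sq h0
  · have hdbq : dist (pt 1 0 : EuclideanSpace ℝ (Fin 2))
        (pt (11/12) (Real.sqrt 23 / 12)) = 1 / Real.sqrt 6 := by
      rw [dist_pt, h16]
      have h1 : ((pt 1 0 : EuclideanSpace ℝ (Fin 2)) 0 - pt (11/12) (Real.sqrt 23 / 12) 0)^2 +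
          ((pt 1 0 : EuclideanSpace ℝ (Fin 2)) 1 - pt (11/12) (Real.sqrt 23 / 12) 1)^2
          = (Real.sqrt 6/6)^2 := by
        simp only [pt, PiLp.toLp_apply, Matrix.cons_val_zero, Matrix.cons_val_one, Matrix.head_cons]
        nlinarith [hs, ht]
      rw [h1, Real.sqrt_sq (by positivity)]
    rw [hdbq]
    have hgoal1 : dist a (pt (11/12) (Real.sqrt 23 / 12)) ≤ 1 - 1/Real.sqrt 6 := by
      rw [dist_pt, h16]
      have h0 : (0:ℝ) ≤ 1 - Real.sqrt 6/6 := by nlinarith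
      calc Real.sqrt ((a 0 - pt (11/12) (Real.sqrt 23 / 12) 0)^2 +
              (a 1 - pt (11/12) (Real.sqrt 23 / 12) 1)^2)
          = Real.sqrt ((x - 11/12)^2 + (y - Real.sqrt 23/12)^2) := by
            rw [hxdef, hydef]; simp [pt]
        _ ≤ Real.sqrt ((1 - Real.sqrt 6/6)^2) := Real.sqrt_le_sqrt key
        _ = 1 - Real.sqrt 6/6 := Real.sqrt_sq h0
    rw [h16] at hgoal1
    linarith
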